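/- arXiv:1805.00591 — 3 statements merged into one kernel-verified Lean document; each statement's English description precedes it below -/
import Mathlib

section
/- For every integer n ≥ 2 and all x, s, t ∈ ℝ^n one has Tr((x ◇ s) ◇ t) = Tr(x ◇ (s ◇ t)). -/
noncomputable section

open Real Finset

/-- Euclidean dot product of two vectors in `ℝ^n`. -/
def dotp {n : ℕ} (x y : Fin n → ℝ) : ℝ := ∑ i, x i * y i

/-- Euclidean norm of a vector in `ℝ^n`. -/
def enorm {n : ℕ} (x : Fin n → ℝ) : ℝ := Real.sqrt (∑ i, (x i) ^ 2)

/-- The tail `x̄ = (x_3, …, x_n)` of a vector, embedded back into `ℝ^n`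
(first two coordinates replaced by `0`). Indices are 0-based, so the tail
consists of the coordinates with index `≥ 2`. -/
def tl {n : ℕ} (x : Fin (n + 2) → ℝ) : Fin (n + 2) → ℝ :=
  fun i => if 2 ≤ (i : ℕ) then x i else 0

/-- The eigenvalue `λ1(x) = x_1 - x_2`. -/
def lam1 {n : ℕ} (x : Fin (n + 2) → ℝ) : ℝ := x 0 - x 1

/-- The eigenvalue `λ2(x) = x_1 + x_2 - √2 ‖x̄‖`. -/
def lam2 {n : ℕ} (x : Fin (n + 2) → ℝ) : ℝ := x 0 + x 1 - Real.sqrt 2 * _root_.enorm (tl x)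

/-- The eigenvalue `λ4(x) = x_1 + x_2 + √2 ‖x̄‖`. -/
def lam4 {n : ℕ} (x : Fin (n + 2) → ℝ) : ℝ := x 0 + x 1 + Real.sqrt 2 * _root_.enorm (tl x)

/-- The Jordan-type product `x ◇ s`. -/
def diam {n : ℕ} (x s : Fin (n + 2) → ℝ) : Fin (n + 2) → ℝ :=
  fun i =>
    if (i : ℕ) = 0 then dotp x s
    else if (i : ℕ) = 1 then x 1 * s 0 + x 0 * s 1 + dotp (tl x) (tl s)
    else (s 0 + s 1) * x i + (x 0 + x 1) * s i

/-- The trace `Tr(x) = 2 x_1`. -/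
def trace {n : ℕ} (x : Fin (n + 2) → ℝ) : ℝ := 2 * x 0

/-- `det̄(x) = (x_1 + x_2)² - 2 ‖x̄‖²`. -/
def detbar {n : ℕ} (x : Fin (n + 2) → ℝ) : ℝ := (x 0 + x 1) ^ 2 - 2 * (_root_.enorm (tl x)) ^ 2

/-- `det(x) = x_1² + x_2² - ‖x̄‖²`. -/
def det2 {n : ℕ} (x : Fin (n + 2) → ℝ) : ℝ := (x 0) ^ 2 + (x 1) ^ 2 - (_root_.enorm (tl x)) ^ 2

/-- `det_(x) = 2 x_1 x_2 - ‖x̄‖²`. -/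
def detund {n : ℕ} (x : Fin (n + 2) → ℝ) : ℝ := 2 * x 0 * x 1 - (_root_.enorm (tl x)) ^ 2

/-- Membership in the type-2 second order cone `Υ^n`. -/
def inCone {n : ℕ} (x : Fin (n + 2) → ℝ) : Prop := 0 ≤ lam1 x ∧ 0 ≤ lam2 x

/-- Membership in the interior `Υ^n_+` of the type-2 second order cone. -/
def inConeInt {n : ℕ} (x : Fin (n + 2) → ℝ) : Prop := 0 < lam1 x ∧ 0 < lam2 x

/-- The unit element `e = (1, 0, …, 0)`. -/
def eVec {n : ℕ} : Fin (n + 2) → ℝ := fun i => if (i : ℕ) = 0 then 1 else 0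

/-- The spectral vector `g(x) = g(λ1(x)) v1 + g(λ2(x)) v2 + g(λ4(x)) v4`.
Its tail entries are `(g(λ4(x)) - g(λ2(x))) xᵢ / (2√2 ‖x̄‖)` when `x̄ ≠ 0`;
when `x̄ = 0` the written formula evaluates to `0` automatically since then
`xᵢ = 0` for `i ≥ 2`. -/
def specVec {n : ℕ} (g : ℝ → ℝ) (x : Fin (n + 2) → ℝ) : Fin (n + 2) → ℝ :=
  fun i =>
    if (i : ℕ) = 0 then (1 / 2) * g (lam1 x) + (1 / 4) * g (lam2 x) + (1 / 4) * g (lam4 x)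
    else if (i : ℕ) = 1 then -(1 / 2) * g (lam1 x) + (1 / 4) * g (lam2 x) + (1 / 4) * g (lam4 x)
    else (g (lam4 x) - g (lam2 x)) * x i / (2 * Real.sqrt 2 * _root_.enorm (tl x))

/-- The barrier value `Ψ(x) = ψ(λ1(x)) + ½ψ(λ2(x)) + ½ψ(λ4(x))`. -/
def Psi {n : ℕ} (g : ℝ → ℝ) (x : Fin (n + 2) → ℝ) : ℝ :=
  g (lam1 x) + (1 / 2) * g (lam2 x) + (1 / 2) * g (lam4 x)

/-- The barrier value of a block vector. -/
def PsiBlk {N : ℕ} {nf : Fin N → ℕ} (g : ℝ → ℝ) (v : ∀ j, Fin (nf j + 2) → ℝ) : ℝ :=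
  ∑ j, Psi g (v j)

/-- The norm-based proximity `δ(v) = (1/√2) (Σⱼ ‖ψ'(vʲ)‖²)^{1/2}`. -/
def deltaBlk {N : ℕ} {nf : Fin N → ℕ} (g : ℝ → ℝ) (v : ∀ j, Fin (nf j + 2) → ℝ) : ℝ :=
  (1 / Real.sqrt 2) * Real.sqrt (∑ j, (_root_.enorm (specVec g (v j))) ^ 2)

/-- `λ_min(v) = minⱼ min{λ1(vʲ), λ2(vʲ)}`. -/
def lamMin {N : ℕ} {nf : Fin N → ℕ} (v : ∀ j, Fin (nf j + 2) → ℝ) : ℝ :=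
  ⨅ j, min (lam1 (v j)) (lam2 (v j))

/-- `Tr((x ◇ s) ◇ t) = Tr(x ◇ (s ◇ t))`. -/
theorem stmt2 (n : ℕ) (x s t : Fin (n + 2) → ℝ) :
    trace (diam (diam x s) t) = trace (diam x (diam s t)) := by
  simp only [trace, diam, dotp, tl, Fin.sum_univ_succ, Fin.val_zero, Fin.val_succ, zero_add]
  norm_num
  have h1 : ∑ i : Fin n, ((s 0 + s 1) * x i.succ.succ + (x 0 + x 1) * s i.succ.succ) *
      t i.succ.succ = (s 0 + s 1) * ∑ i : Fin n, x i.succ.succ * t i.succ.succ +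
      (x 0 + x 1) * ∑ i : Fin n, s i.succ.succ * t i.succ.succ := by
    rw [Finset.mul_sum, Finset.mul_sum, ← Finset.sum_add_distrib]
    exact Finset.sum_congr rfl fun i _ => by ring
  have h2 : ∑ i : Fin n, x i.succ.succ * ((t 0 + t 1) * s i.succ.succ +
      (s 0 + s 1) * t i.succ.succ) = (t 0 + t 1) * ∑ i : Fin n, x i.succ.succ * s i.succ.succ +
      (s 0 + s 1) * ∑ i : Fin n, x i.succ.succ * t i.succ.succ := by
    rw [Finset.mul_sum, Finset.mul_sum, ← Finset.sum_add_distrib]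
    exact Finset.sum_congr rfl fun i _ => by ring
  rw [h1, h2]
  ring

end
end

section
/- For every integer n ≥ 2, every x ∈ ℝ^n, and every s ∈ Υ^n one has min{λ1(x), λ2(x)}·Tr(s) ≤ Tr(x ◇ s) ≤ max{λ1(x), λ4(x)}·Tr(s). -/
noncomputable section

open Real Finset

lemma dot_split {n : ℕ} (x s : Fin (n + 2) → ℝ) :
    dotp x s = x 0 * s 0 + x 1 * s 1 + dotp (tl x) (tl s) := by
  simp only [dotp, tl, Fin.sum_univ_succ, Fin.val_zero, Fin.val_succ]
  norm_num
  ring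

lemma enorm_nonneg' {n : ℕ} (x : Fin n → ℝ) : 0 ≤ _root_.enorm x := Real.sqrt_nonneg _

lemma sq_enorm {n : ℕ} (x : Fin n → ℝ) : (_root_.enorm x) ^ 2 = ∑ i, (x i) ^ 2 :=
  Real.sq_sqrt (Finset.sum_nonneg fun i _ => sq_nonneg _)

lemma abs_dot_le {n : ℕ} (x s : Fin n → ℝ) : |dotp x s| ≤ _root_.enorm x * _root_.enorm s := by
  have h := Finset.sum_mul_sq_le_sq_mul_sq Finset.univ x s
  have hx := enorm_nonneg' x
  have hs := enorm_nonneg' s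
  have h2 : (dotp x s) ^ 2 ≤ (_root_.enorm x * _root_.enorm s) ^ 2 := by
    rw [mul_pow, sq_enorm, sq_enorm]; exact h
  rw [← Real.sqrt_sq_eq_abs]
  calc Real.sqrt ((dotp x s) ^ 2) ≤ Real.sqrt ((_root_.enorm x * _root_.enorm s) ^ 2) := Real.sqrt_le_sqrt h2
    _ = _root_.enorm x * _root_.enorm s := Real.sqrt_sq (mul_nonneg hx hs)

/-- for `x ∈ ℝ^n` and `s ∈ Υ^n`,
`min{λ1(x), λ2(x)}·Tr(s) ≤ Tr(x ◇ s) ≤ max{λ1(x), λ4(x)}·Tr(s)`. -/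
theorem stmt4 (n : ℕ) (x s : Fin (n + 2) → ℝ) (hs : inCone s) :
    min (lam1 x) (lam2 x) * trace s ≤ trace (diam x s) ∧
    trace (diam x s) ≤ max (lam1 x) (lam4 x) * trace s := by
  obtain ⟨h1, h2⟩ := hs
  have htr : trace (diam x s) = 2 * dotp x s := by
    simp [trace, diam, show ((0 : Fin (n+2)) : ℕ) = 0 from rfl]
  have hsplit := dot_split x s
  have hCS := abs_dot_le (tl x) (tl s)
  rw [abs_le] at hCS
  have hEx := enorm_nonneg' (tl x)
  have hEs := enorm_nonneg' (tl s)
  have hsq2 : Real.sqrt 2 ^ 2 = 2 := Real.sq_sqrt (by norm_num)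
  have hsq2' : (0:ℝ) ≤ Real.sqrt 2 := Real.sqrt_nonneg 2
  rw [htr, hsplit]
  simp only [lam1, lam2, lam4, trace] at h1 h2 ⊢
  have hss : 0 ≤ s 0 + s 1 := by nlinarith [mul_nonneg hsq2' hEs]
  have hkey : 2 * _root_.enorm (tl s) ≤ Real.sqrt 2 * (s 0 + s 1) := by
    nlinarith [mul_nonneg hsq2' h2]
  have htail : 0 ≤ _root_.enorm (tl x) * (Real.sqrt 2 * (s 0 + s 1) - 2 * _root_.enorm (tl s)) :=
    mul_nonneg hEx (by linarith)
  constructor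
  · rcases le_or_gt (x 0 - x 1) (x 0 + x 1 - Real.sqrt 2 * _root_.enorm (tl x)) with hm | hm
    · rw [min_eq_left hm]
      nlinarith [htail, hCS.1, mul_nonneg (sub_nonneg.mpr hm) hss]
    · rw [min_eq_right hm.le]
      nlinarith [htail, hCS.1, mul_nonneg (sub_nonneg.mpr hm.le) h1]
  · rcases le_or_gt (x 0 + x 1 + Real.sqrt 2 * _root_.enorm (tl x)) (x 0 - x 1) with hm | hm
    · rw [max_eq_left hm]
      nlinarith [htail, hCS.2, mul_nonneg (sub_nonneg.mpr hm) hss]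
    · rw [max_eq_right hm.le]
      nlinarith [htail, hCS.2, mul_nonneg (sub_nonneg.mpr hm.le) h1]

end
end

section
/- For every integer n ≥ 2 and all x, s ∈ ℝ^n one has det(x ◇ s) ≤ det(x)·det(s) + det_(x)·det_(s) and det_(x ◇ s) ≤ det(x)·det_(s) + det_(x)·det(s); in both inequalities equality holds if and only if the vectors x̄ and s̄ are linearly dependent. -/
noncomputable section

open Real Finset

lemma enorm_sq' {n : ℕ} (y : Fin n → ℝ) : _root_.enorm y ^ 2 = ∑ i, y i ^ 2 :=
  Real.sq_sqrt (Finset.sum_nonneg fun i _ => sq_nonneg _)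

lemma split_sum' {n : ℕ} (f g : Fin (n + 2) → ℝ) :
    ∑ i, f i * g i = f 0 * g 0 + f 1 * g 1 + ∑ i, tl f i * tl g i := by
  have h : ∀ i : Fin (n + 2), f i * g i =
      (if i = 0 then f 0 * g 0 else 0) + (if i = 1 then f 1 * g 1 else 0)
        + tl f i * tl g i := by
    intro i
    by_cases h2 : 2 ≤ (i : ℕ)
    · have h0 : i ≠ 0 := by intro h; subst h; simp at h2
      have h1 : i ≠ 1 := by
        intro h; subst h; simp [Fin.val_one] at h2
      simp [tl, h2, h0, h1]
    · have : (i : ℕ) = 0 ∨ (i : ℕ) = 1 := by omega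
      rcases this with h | h
      · have h0 : i = 0 := by ext; simp [h]
        subst h0; simp [tl]
      · have h1 : i = 1 := by ext; simp [h, Fin.val_one]
        subst h1; simp [tl, Fin.val_one]
  rw [Finset.sum_congr rfl (fun i _ => h i), Finset.sum_add_distrib,
    Finset.sum_add_distrib, Finset.sum_ite_eq' Finset.univ (0 : Fin (n+2)),
    Finset.sum_ite_eq' Finset.univ (1 : Fin (n+2))]
  simp

lemma dep_iff_aux {n : ℕ} (u v : Fin (n + 2) → ℝ) :
    (∑ i, u i * v i) ^ 2 = (∑ i, u i ^ 2) * (∑ i, v i ^ 2) ↔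
      ∃ a b : ℝ, (a ≠ 0 ∨ b ≠ 0) ∧ a • u + b • v = 0 := by
  constructor
  · intro heq
    by_cases hv : v = 0
    · exact ⟨0, 1, Or.inr one_ne_zero, by simp [hv]⟩
    · obtain ⟨i0, hi0⟩ := Function.ne_iff.mp hv
      have hVpos : 0 < ∑ i, v i ^ 2 := by
        have h1 : v i0 ^ 2 ≤ ∑ i, v i ^ 2 :=
          Finset.single_le_sum (fun j _ => sq_nonneg (v j)) (Finset.mem_univ i0)
        have h2 : 0 < v i0 ^ 2 :=
          lt_of_le_of_ne (sq_nonneg _) (Ne.symm (pow_ne_zero 2 hi0))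
        linarith
      refine ⟨∑ i, v i ^ 2, -(∑ i, u i * v i), Or.inl (ne_of_gt hVpos), ?_⟩
      have hsum : ∑ i, ((∑ j, v j ^ 2) * u i - (∑ j, u j * v j) * v i) ^ 2 = 0 := by
        have expand : ∀ i : Fin (n+2),
            ((∑ j, v j ^ 2) * u i - (∑ j, u j * v j) * v i) ^ 2 =
            (∑ j, v j ^ 2)^2 * u i ^ 2
              - 2*(∑ j, v j ^ 2)*(∑ j, u j * v j)*(u i * v i)
              + (∑ j, u j * v j)^2 * v i ^ 2 := fun i => by ring
        rw [Finset.sum_congr rfl (fun i _ => expand i)]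
        simp only [Finset.sum_add_distrib, Finset.sum_sub_distrib, ← Finset.mul_sum]
        linear_combination (-(∑ j, v j ^ 2)) * heq
      have hz := (Finset.sum_eq_zero_iff_of_nonneg
        (fun i _ => sq_nonneg _)).mp hsum
      funext i
      have h0 : (∑ j, v j ^ 2) * u i - (∑ j, u j * v j) * v i = 0 :=
        pow_eq_zero_iff (two_ne_zero) |>.mp (hz i (Finset.mem_univ i))
      simp only [Pi.add_apply, Pi.smul_apply, smul_eq_mul, Pi.zero_apply]
      linarith
  · rintro ⟨a, b, hab, h⟩
    have h' : ∀ i, a * u i + b * v i = 0 := by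
      intro i
      have := congrFun h i
      simpa using this
    have e2 : a^2 * ∑ i, u i ^ 2 = b^2 * ∑ i, v i ^ 2 := by
      rw [Finset.mul_sum, Finset.mul_sum]
      refine Finset.sum_congr rfl fun i _ => ?_
      linear_combination (a * u i - b * v i) * h' i
    rcases hab with ha | hb
    · have e1 : a^2 * ∑ i, u i * v i = -(a*b) * ∑ i, v i ^ 2 := by
        rw [Finset.mul_sum, Finset.mul_sum]
        refine Finset.sum_congr rfl fun i _ => ?_
        linear_combination (a * v i) * h' i
      have key : a^4 * (∑ i, u i * v i)^2
          = a^4 * ((∑ i, u i ^ 2) * (∑ i, v i ^ 2)) := by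
        linear_combination (a^2*(∑ i, u i * v i) - a*b*(∑ i, v i ^ 2)) * e1
          + (-(a^2*(∑ i, v i ^ 2))) * e2
      exact mul_left_cancel₀ (pow_ne_zero 4 ha) key
    · have e1 : b^2 * ∑ i, u i * v i = -(a*b) * ∑ i, u i ^ 2 := by
        rw [Finset.mul_sum, Finset.mul_sum]
        refine Finset.sum_congr rfl fun i _ => ?_
        linear_combination (b * u i) * h' i
      have key : b^4 * (∑ i, u i * v i)^2
          = b^4 * ((∑ i, u i ^ 2) * (∑ i, v i ^ 2)) := by
        linear_combination (b^2*(∑ i, u i * v i) - a*b*(∑ i, u i ^ 2)) * e1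
          + (b^2*(∑ i, u i ^ 2)) * e2
      exact mul_left_cancel₀ (pow_ne_zero 4 hb) key

lemma main_aux {n : ℕ} (x s : Fin (n + 2) → ℝ) :
    det2 (diam x s) = det2 x * det2 s + detund x * detund s
        - 2 * ((∑ i, tl x i ^ 2) * (∑ i, tl s i ^ 2) - (∑ i, tl x i * tl s i) ^ 2) ∧
    detund (diam x s) = det2 x * detund s + detund x * det2 s
        - 2 * ((∑ i, tl x i ^ 2) * (∑ i, tl s i ^ 2) - (∑ i, tl x i * tl s i) ^ 2) := by
  have hU := enorm_sq' (tl x)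
  have hV := enorm_sq' (tl s)
  have htl : tl (diam x s) = fun i => (s 0 + s 1) * tl x i + (x 0 + x 1) * tl s i := by
    funext i
    by_cases h2 : 2 ≤ (i : ℕ)
    · have h0 : ¬ (i : ℕ) = 0 := by omega
      have h1 : ¬ (i : ℕ) = 1 := by omega
      simp [tl, diam, h2, h0, h1]
    · simp [tl, h2]
  have hW : _root_.enorm (tl (diam x s)) ^ 2 =
      (s 0 + s 1)^2 * (∑ i, tl x i ^ 2)
        + 2*(s 0 + s 1)*(x 0 + x 1)*(∑ i, tl x i * tl s i)
        + (x 0 + x 1)^2 * (∑ i, tl s i ^ 2) := by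
    rw [enorm_sq', htl]
    have expand : ∀ i : Fin (n+2),
        ((s 0 + s 1) * tl x i + (x 0 + x 1) * tl s i)^2 =
        (s 0 + s 1)^2 * tl x i ^2 + 2*(s 0+s 1)*(x 0+x 1)*(tl x i * tl s i)
          + (x 0+x 1)^2 * tl s i ^2 := fun i => by ring
    rw [Finset.sum_congr rfl (fun i _ => expand i)]
    simp only [Finset.sum_add_distrib, ← Finset.mul_sum]
  have hD0 : diam x s 0 = x 0 * s 0 + x 1 * s 1 + ∑ i, tl x i * tl s i := by
    have h : diam x s 0 = dotp x s := by simp [diam]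
    rw [h, dotp, split_sum']
  have hD1 : diam x s 1 = x 1 * s 0 + x 0 * s 1 + ∑ i, tl x i * tl s i := by
    simp [diam, dotp]
  constructor
  · simp only [det2, detund, hD0, hD1, hW, hU, hV]; ring
  · simp only [det2, detund, hD0, hD1, hW, hU, hV]; ring

/-- `det(x ◇ s) ≤ det(x)det(s) + det_(x)det_(s)` and
`det_(x ◇ s) ≤ det(x)det_(s) + det_(x)det(s)`; in both inequalities equality
holds iff the tails `x̄` and `s̄` are linearly dependent. -/
theorem stmt6 (n : ℕ) (x s : Fin (n + 2) → ℝ) :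
    det2 (diam x s) ≤ det2 x * det2 s + detund x * detund s ∧
    detund (diam x s) ≤ det2 x * detund s + detund x * det2 s ∧
    (det2 (diam x s) = det2 x * det2 s + detund x * detund s ↔
      ∃ a b : ℝ, (a ≠ 0 ∨ b ≠ 0) ∧ a • tl x + b • tl s = 0) ∧
    (detund (diam x s) = det2 x * detund s + detund x * det2 s ↔
      ∃ a b : ℝ, (a ≠ 0 ∨ b ≠ 0) ∧ a • tl x + b • tl s = 0) := by
  obtain ⟨hd2, hdu⟩ := main_aux x s
  have hCS := Finset.sum_mul_sq_le_sq_mul_sq Finset.univ (tl x) (tl s)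
  have hdep := dep_iff_aux (tl x) (tl s)
  refine ⟨by linarith, by linarith, ?_, ?_⟩
  · rw [hd2]
    constructor
    · intro h; exact hdep.mp (by linarith)
    · intro h; have := hdep.mpr h; linarith
  · rw [hdu]
    constructor
    · intro h; exact hdep.mp (by linarith)
    · intro h; have := hdep.mpr h; linarith


end
end
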